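/- Let m > 0, ω ∈ (-m,m), and suppose f : (0,∞) → ℝ is continuous, nonnegative, tends to 0 at infinity, and satisfies the hypotheses of the exponential comparison: for every ε ∈ (0, 2m(m-ω)) there is R_ε with f'' ≥ (2m(m-ω) - ε) f on [R_ε, ∞). Then for each such ε there is a constant C_ε > 0 with f(r) ≤ C_ε e^{-√(2m(m-ω)-ε)·r} for all r > 0. -/

import Mathlib

/-!
With `k = 2m(m-ω) - ε` and `μ = √k`, the barrier `φ r = C e^{-μ r}` solves `φ'' = k φ`. If
`h = f - φ` were positive somewhere on `[R, ∞)`, then, since `h → 0` at infinity, it would attain a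
positive maximum at some `r₀ > R`. Near `r₀` we have `f > φ ≥ 0`, so `f'' ≥ k f > 0`; this makes `f`
differentiable there (the hypothesis only speaks about `deriv (deriv f)`), and then
`h'' ≥ k h > 0`, so `h` is strictly convex near `r₀`, which rules out an interior maximum.
Choosing `C` so that `φ` dominates `f` on the compact interval `[0, R]` gives the bound everywhere.
-/

open Set Filter Topology Metric

theorem ContinuousOn.exists_isMaxOn_Ici {α β : Type*} [LinearOrder α] [TopologicalSpace α]
    [OrderClosedTopology α] [CompactIccSpace α] [NoMaxOrder α] [NoMinOrder α]
    [LinearOrder β] [TopologicalSpace β] [ClosedIciTopology β] {f : α → β} {a x₀ : α}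
    (hf : ContinuousOn f (Ici a)) (hx₀ : x₀ ∈ Ici a) (hc : ∀ᶠ x in atTop, f x ≤ f x₀) :
    ∃ x ∈ Ici a, IsMaxOn f (Ici a) x := by
  refine hf.exists_isMaxOn' isClosed_Ici hx₀ ?_
  rw [cocompact_eq_atBot_atTop, inf_sup_right, (disjoint_atBot_principal_Ici a).eq_bot,
    bot_sup_eq]
  exact hc.filter_mono inf_le_left

theorem StrictConvexOn.not_isLocalMax {s : Set ℝ} {f : ℝ → ℝ} {x : ℝ}
    (hf : StrictConvexOn ℝ s f) (hs : s ∈ 𝓝 x) : ¬IsLocalMax f x := by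
  intro hmax
  obtain ⟨δ, hδ, hball⟩ := Metric.eventually_nhds_iff_ball.1 (hmax.and hs)
  have hmem : ∀ t, |t| < δ → f (x + t) ≤ f x ∧ x + t ∈ s := fun t ht =>
    hball _ (by simpa [Real.dist_eq] using ht)
  have hδ2 : |δ / 2| < δ := by rw [abs_of_pos (half_pos hδ)]; linarith
  obtain ⟨hleft, hleft_mem⟩ := hmem (-(δ / 2)) (by rwa [abs_neg])
  obtain ⟨hright, hright_mem⟩ := hmem (δ / 2) hδ2
  have hmid := hf.2 hleft_mem hright_mem (by linarith) one_half_pos one_half_pos (by norm_num)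
  simp only [smul_eq_mul] at hmid
  rw [show 1 / 2 * (x + -(δ / 2)) + 1 / 2 * (x + δ / 2) = x by ring] at hmid
  linarith

theorem hasDerivAt_deriv_of_eventually_differentiableAt_nhdsNE {E : Type*}
    [NormedAddCommGroup E] [NormedSpace ℝ E] {f : ℝ → E} {x : ℝ}
    (hdiff : ∀ᶠ y in 𝓝[≠] x, DifferentiableAt ℝ f y) (hf : ContinuousAt f x)
    (hf' : ContinuousAt (deriv f) x) : HasDerivAt f (deriv f x) x := by
  obtain ⟨s, hs, hsdiff⟩ := hdiff.exists_mem
  have hs_diff : DifferentiableOn ℝ f s := fun y hy => (hsdiff y hy).differentiableWithinAt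
  have hright := hasDerivWithinAt_Ici_of_tendsto_deriv hs_diff hf.continuousWithinAt
    (nhdsWithin_mono _ (fun y hy => ne_of_gt hy) hs) (hf'.tendsto.mono_left nhdsWithin_le_nhds)
  have hleft := hasDerivWithinAt_Iic_of_tendsto_deriv hs_diff hf.continuousWithinAt
    (nhdsWithin_mono _ (fun y hy => ne_of_lt hy) hs) (hf'.tendsto.mono_left nhdsWithin_le_nhds)
  simpa using hleft.union hright

/-- `deriv f` is strictly increasing near `x`, so it vanishes at most at `x`. Where it does not
vanish, `f` is differentiable (otherwise `deriv f` would be the junk value `0`); at `x` itself,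
continuity of `deriv f` extends differentiability. -/
theorem differentiableAt_of_eventually_deriv_deriv_pos {f : ℝ → ℝ} {x : ℝ}
    (hf : ContinuousAt f x) (hf'' : ∀ᶠ y in 𝓝 x, 0 < deriv (deriv f) y) :
    DifferentiableAt ℝ f x := by
  by_cases hx : deriv f x = 0
  swap
  · exact differentiableAt_of_deriv_ne_zero hx
  obtain ⟨δ, hδ, hball⟩ := Metric.eventually_nhds_iff_ball.1 hf''
  have hf'_diff : ∀ y ∈ ball x δ, DifferentiableAt ℝ (deriv f) y := fun y hy =>
    differentiableAt_of_deriv_ne_zero (hball y hy).ne'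
  have hf'_mono : StrictMonoOn (deriv f) (ball x δ) :=
    strictMonoOn_of_deriv_pos (convex_ball x δ)
      (fun y hy => (hf'_diff y hy).continuousAt.continuousWithinAt)
      (by rwa [interior_eq_iff_isOpen.2 isOpen_ball])
  refine (hasDerivAt_deriv_of_eventually_differentiableAt_nhdsNE ?_ hf
    (hf'_diff x (mem_ball_self hδ)).continuousAt).differentiableAt
  filter_upwards [nhdsWithin_le_nhds (ball_mem_nhds x hδ), self_mem_nhdsWithin] with y hy hyx
  refine differentiableAt_of_deriv_ne_zero fun hy0 => hyx ?_
  exact hf'_mono.injOn hy (mem_ball_self hδ) (hy0.trans hx.symm)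

theorem le_of_deriv_deriv_ge_mul_self {k R : ℝ} {f φ : ℝ → ℝ} (hk : 0 < k)
    (hf : ContinuousOn f (Ici R)) (hφ : ContDiff ℝ 2 φ) (hφ₀ : ∀ x > R, 0 ≤ φ x)
    (hφ'' : ∀ x > R, deriv (deriv φ) x ≤ k * φ x) (hf'' : ∀ x > R, k * f x ≤ deriv (deriv f) x)
    (hR : f R ≤ φ R) (hlim : Tendsto (fun x => f x - φ x) atTop (𝓝 0)) :
    ∀ x ≥ R, f x ≤ φ x := by
  set h := fun x => f x - φ x with h_def
  have hh : ContinuousOn h (Ici R) := hf.sub hφ.continuous.continuousOn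
  by_contra! ⟨x₁, hx₁R, hx₁⟩
  have hx₁pos : 0 < h x₁ := sub_pos.2 hx₁
  obtain ⟨x₀, hx₀R, hmax⟩ := hh.exists_isMaxOn_Ici hx₁R (hlim.eventually (ge_mem_nhds hx₁pos))
  have hx₀pos : 0 < h x₀ := hx₁pos.trans_le (hmax hx₁R)
  have hRx₀ : R < x₀ := hx₀R.lt_of_ne (by rintro rfl; simp only [h_def] at hx₀pos; linarith)
  have hh_pos : ∀ᶠ y in 𝓝 x₀, 0 < h y :=
    (hh.continuousAt (Ici_mem_nhds hRx₀)).eventually (lt_mem_nhds hx₀pos)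
  obtain ⟨δ, hδ, hball⟩ := Metric.eventually_nhds_iff_ball.1 ((lt_mem_nhds hRx₀).and hh_pos)
  have hf''_pos : ∀ y ∈ ball x₀ δ, 0 < deriv (deriv f) y := fun y hy => by
    have := (hball y hy).2
    simp only [h_def] at this
    nlinarith [hf'' y (hball y hy).1, hφ₀ y (hball y hy).1]
  have hf_diff : ∀ y ∈ ball x₀ δ, DifferentiableAt ℝ f y := fun y hy =>
    differentiableAt_of_eventually_deriv_deriv_pos
      (hf.continuousAt (Ici_mem_nhds (hball y hy).1))
      (eventually_of_mem (isOpen_ball.mem_nhds hy) hf''_pos)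
  have hφ_diff : Differentiable ℝ φ := hφ.differentiable (by norm_num)
  have hφ'_diff : Differentiable ℝ (deriv φ) :=
    (contDiff_succ_iff_deriv.1 hφ).2.2.differentiable one_ne_zero
  have hconv : StrictConvexOn ℝ (ball x₀ δ) h := by
    refine strictConvexOn_of_deriv2_pos (convex_ball x₀ δ)
      (hh.mono fun y hy => (hball y hy).1.le) fun y hy => ?_
    rw [interior_eq_iff_isOpen.2 isOpen_ball] at hy
    have hderiv : deriv h =ᶠ[𝓝 y] fun z => deriv f z - deriv φ z := by
      filter_upwards [isOpen_ball.mem_nhds hy] with z hz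
      exact deriv_sub (hf_diff z hz) (hφ_diff z)
    have := (hball y hy).2
    simp only [h_def] at this
    rw [Function.iterate_succ_apply, Function.iterate_one, hderiv.deriv_eq,
      deriv_fun_sub (differentiableAt_of_deriv_ne_zero (hf''_pos y hy).ne') (hφ'_diff y)]
    nlinarith [hf'' y (hball y hy).1, hφ'' y (hball y hy).1]
  exact hconv.not_isLocalMax (ball_mem_nhds x₀ hδ) (hmax.isLocalMax (Ici_mem_nhds hRx₀))

theorem deriv_const_mul_exp_neg_mul (C μ : ℝ) :
    deriv (fun x => C * Real.exp (-μ * x)) = fun x => -μ * C * Real.exp (-μ * x) :=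
  funext fun x => by
    rw [(((hasDerivAt_id' x).const_mul (-μ)).exp.const_mul C).deriv]
    ring

theorem deriv_deriv_const_mul_exp_neg_mul (C μ x : ℝ) :
    deriv (deriv fun x => C * Real.exp (-μ * x)) x = μ ^ 2 * (C * Real.exp (-μ * x)) := by
  rw [deriv_const_mul_exp_neg_mul, deriv_const_mul_exp_neg_mul]
  ring

theorem stmt11_general (m ω : ℝ) (f : ℝ → ℝ)
    (hc : ContinuousOn f (Set.Ici 0))
    (hlim : Filter.Tendsto f Filter.atTop (nhds 0))
    (hcomp : ∀ ε ∈ Set.Ioo 0 (2 * m * (m - ω)),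
      ∃ R > (0 : ℝ), ∀ r, R ≤ r → (2 * m * (m - ω) - ε) * f r ≤ deriv (deriv f) r) :
    ∀ ε ∈ Set.Ioo 0 (2 * m * (m - ω)),
      ∃ C > (0 : ℝ), ∀ r > (0 : ℝ),
        f r ≤ C * Real.exp (-Real.sqrt (2 * m * (m - ω) - ε) * r) := by
  intro ε hε
  obtain ⟨R, hR, hf''⟩ := hcomp ε hε
  set k := 2 * m * (m - ω) - ε
  have hk : 0 < k := sub_pos.2 hε.2
  set μ := Real.sqrt k
  obtain ⟨M, hM⟩ :=
    isCompact_Icc.bddAbove_image (hc.mono (Icc_subset_Ici_self : Icc 0 R ⊆ Ici 0))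
  set C := (max M 0 + 1) * Real.exp (μ * R)
  have hC : 0 < C := by positivity
  set φ := fun x => C * Real.exp (-μ * x)
  have hφR : φ R = max M 0 + 1 := by
    simp only [φ, C, mul_assoc, ← Real.exp_add, neg_mul, add_neg_cancel, Real.exp_zero, mul_one]
  have hf_le_on_Icc : ∀ r ∈ Icc 0 R, f r ≤ φ r := fun r hr => calc
    f r ≤ M := hM (mem_image_of_mem f hr)
    _ ≤ φ R := by rw [hφR]; linarith [le_max_left M 0]
    _ ≤ φ r := by simp only [φ, neg_mul]; gcongr; exact hr.2
  have hφ_lim : Tendsto φ atTop (𝓝 0) := by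
    simpa [φ] using (Real.tendsto_exp_atBot.comp
      (tendsto_id.const_mul_atTop_of_neg (neg_neg_of_pos (Real.sqrt_pos.2 hk)))).const_mul C
  refine ⟨C, hC, fun r hr => ?_⟩
  rcases le_total r R with hrR | hRr
  · exact hf_le_on_Icc r ⟨hr.le, hrR⟩
  · refine le_of_deriv_deriv_ge_mul_self hk (hc.mono (Ici_subset_Ici.2 hR.le)) (by fun_prop)
      (fun x _ => by positivity)
      (fun x _ => by rw [deriv_deriv_const_mul_exp_neg_mul, Real.sq_sqrt hk.le])
      (fun x hx => hf'' x hx.le) (hf_le_on_Icc R ⟨hR.le, le_rfl⟩)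
      (by simpa using hlim.sub hφ_lim) r hRr

/-- Global exponential decay: if `f ≥ 0` is continuous on `[0,∞)`, tends to `0` at
infinity, and for every `ε ∈ (0, 2m(m-ω))` satisfies `f'' ≥ (2m(m-ω)-ε) f` on some
`[R_ε, ∞)`, then `f(r) ≤ C_ε e^{-√(2m(m-ω)-ε) r}` for all `r > 0`. -/
theorem stmt11 (m ω : ℝ) (hm : 0 < m) (hω : ω ∈ Set.Ioo (-m) m) (f : ℝ → ℝ)
    (hc : ContinuousOn f (Set.Ici 0)) (hnn : ∀ r > (0 : ℝ), 0 ≤ f r)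
    (hlim : Filter.Tendsto f Filter.atTop (nhds 0))
    (hcomp : ∀ ε ∈ Set.Ioo 0 (2 * m * (m - ω)),
      ∃ R > (0 : ℝ), ∀ r, R ≤ r → (2 * m * (m - ω) - ε) * f r ≤ deriv (deriv f) r) :
    ∀ ε ∈ Set.Ioo 0 (2 * m * (m - ω)),
      ∃ C > (0 : ℝ), ∀ r > (0 : ℝ),
        f r ≤ C * Real.exp (-Real.sqrt (2 * m * (m - ω) - ε) * r) :=
  stmt11_general m ω f hc hlim hcomp
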